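/- arXiv:2511.11151 — 2 statements merged into one kernel-verified Lean document; each statement's English description precedes it below -/
import Mathlib

section
/- Define q : ℍ → ℝ by q(w) = (4·Im(w)/(π·|w|⁴)) · (Im(w) + Re(w)·(π/2 − arg(w))), where arg denotes the principal argument (taking values in (0, π) on ℍ), and define ĝ : ℝ → ℝ by ĝ(θ) = (4/(3π)) · (θ(π − θ) + (π/2 − θ)·sin θ·cos θ + 2·sin²θ). Then the function u : ℍ → ℝ defined by u(z) = ĝ(arg z) is twice continuously differentiable on ℍ (as a function of (Re z, Im z) ∈ ℝ²) and satisfies the Poisson equation Δu(z) = −(4/3)·q(z) for all z ∈ ℍ, where Δ = ∂²/∂x² + ∂²/∂y² is the Euclidean Laplacian. -/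
/-!
On the upper half-plane `arg z = π/2 - arctan (Re z / Im z)`, and `arg` is harmonic with
`|∇ arg z| = 1/|z|`; hence `Δ (g ∘ arg) = g''(arg z) / |z|²` for any twice differentiable `g`.
For `ĝ` one finds `ĝ''(θ) = -(16/(3π)) sin θ (sin θ + (π/2 - θ) cos θ)`, which in polar
coordinates `z = r e^{iθ}` is exactly `-(4/3) r² q(z)`. Smoothness holds because `arg = Im ∘ log`.
-/

open Real Filter Topology

/-- The Euclidean Laplacian `Δf = ∂²f/∂x² + ∂²f/∂y²` of a function `f : ℂ → ℝ` of the
real coordinates `(Re z, Im z)`. -/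
noncomputable def planeLaplacian (f : ℂ → ℝ) (z : ℂ) : ℝ :=
  deriv (deriv (fun x : ℝ => f ((x : ℂ) + z.im * Complex.I))) z.re +
    deriv (deriv (fun y : ℝ => f ((z.re : ℂ) + y * Complex.I))) z.im

/-- The density `q(ℍ; 0, ∞; ·)` of Lemma 4.2:
`q(w) = (4 Im w/(π|w|⁴)) (Im w + Re w (π/2 − arg w))`. -/
noncomputable def qDensity (w : ℂ) : ℝ :=
  4 * w.im / (π * ‖w‖ ^ 4) * (w.im + w.re * (π / 2 - Complex.arg w))

/-- The explicit solution `ĝ(θ) = (4/(3π))(θ(π−θ) + (π/2−θ) sin θ cos θ + 2 sin²θ)` of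
equation (1.11)/(4.6). -/
noncomputable def ghat (θ : ℝ) : ℝ :=
  4 / (3 * π) * (θ * (π - θ) + (π / 2 - θ) * sin θ * cos θ + 2 * sin θ ^ 2)

namespace Complex

theorem arg_eq_pi_div_two_sub_arctan {z : ℂ} (hz : 0 < z.im) :
    arg z = π / 2 - Real.arctan (z.re / z.im) := by
  have hz0 : z ≠ 0 := by rintro rfl; simp at hz
  have hpos : 0 < arg z :=
    (arg_nonneg_iff.2 hz.le).lt_of_ne fun h => hz.ne' (arg_eq_zero_iff.1 h.symm).2
  have hpi : arg z < π := arg_lt_pi_iff.2 (Or.inr hz.ne')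
  have htan : Real.tan (π / 2 - arg z) = z.re / z.im := by
    rw [Real.tan_pi_div_two_sub, Real.tan_eq_sin_div_cos, sin_arg, cos_arg hz0, inv_div,
      div_div_div_cancel_right₀ (norm_ne_zero_iff.2 hz0)]
  rw [← htan, Real.arctan_tan] <;> linarith

theorem contDiffAt_arg {z : ℂ} (hz : z ∈ slitPlane) {n : WithTop ℕ∞} :
    ContDiffAt ℝ n arg z := by
  have h : arg = imCLM ∘ log := funext fun w => (log_im w).symm
  exact h ▸ imCLM.contDiff.contDiffAt.comp z ((contDiffAt_log hz).restrict_scalars ℝ)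

end Complex

theorem deriv_deriv_of_eventuallyEq_comp {u g g' g'' θ θ' : ℝ → ℝ} {θ'' x : ℝ}
    (hg : ∀ t, HasDerivAt g (g' t) t) (hg' : ∀ t, HasDerivAt g' (g'' t) t)
    (hu : u =ᶠ[𝓝 x] g ∘ θ) (hθ : ∀ᶠ t in 𝓝 x, HasDerivAt θ (θ' t) t)
    (hθ' : HasDerivAt θ' θ'' x) :
    deriv (deriv u) x = g'' (θ x) * θ' x ^ 2 + g' (θ x) * θ'' := by
  have hu' : deriv u =ᶠ[𝓝 x] fun t => g' (θ t) * θ' t := by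
    filter_upwards [hu.eventuallyEq_nhds, hθ] with t hut hθt
    rw [hut.deriv_eq]
    exact ((hg (θ t)).comp t hθt).deriv
  rw [hu'.deriv_eq]
  refine (((hg' (θ x)).comp x hθ.self_of_nhds).mul hθ').deriv.trans ?_
  simp only [Function.comp_apply]
  ring

theorem hasDerivAt_arctan_div_const {y : ℝ} (hy : y ≠ 0) (x : ℝ) :
    HasDerivAt (fun x => arctan (x / y)) (y / (x ^ 2 + y ^ 2)) x := by
  refine ((hasDerivAt_id' x).div_const y).arctan.congr_deriv ?_
  field_simp
  ring

theorem hasDerivAt_arctan_const_div (x : ℝ) {y : ℝ} (hy : y ≠ 0) :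
    HasDerivAt (fun y => arctan (x / y)) (-x / (x ^ 2 + y ^ 2)) y := by
  refine ((hasDerivAt_const y x).div (hasDerivAt_id' y) hy).arctan.congr_deriv ?_
  simp only [Pi.div_apply]
  field_simp
  ring

theorem hasDerivAt_div_sq_add_sq_left {y : ℝ} (hy : y ≠ 0) (x : ℝ) :
    HasDerivAt (fun x => y / (x ^ 2 + y ^ 2)) (-(2 * x * y) / (x ^ 2 + y ^ 2) ^ 2) x := by
  have hxy : x ^ 2 + y ^ 2 ≠ 0 := by positivity
  refine ((hasDerivAt_const x y).div ((hasDerivAt_pow 2 x).add_const (y ^ 2)) hxy).congr_deriv ?_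
  field_simp
  ring

theorem hasDerivAt_div_sq_add_sq_right (x : ℝ) {y : ℝ} (hy : y ≠ 0) :
    HasDerivAt (fun y => -x / (x ^ 2 + y ^ 2)) (2 * x * y / (x ^ 2 + y ^ 2) ^ 2) y := by
  have hxy : x ^ 2 + y ^ 2 ≠ 0 := by positivity
  refine ((hasDerivAt_const y (-x)).div ((hasDerivAt_pow 2 y).const_add (x ^ 2)) hxy).congr_deriv ?_
  field_simp
  ring

theorem planeLaplacian_comp_arg {g g' g'' : ℝ → ℝ} (hg : ∀ θ, HasDerivAt g (g' θ) θ)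
    (hg' : ∀ θ, HasDerivAt g' (g'' θ) θ) {z : ℂ} (hz : 0 < z.im) :
    planeLaplacian (fun w => g (Complex.arg w)) z = g'' (Complex.arg z) / ‖z‖ ^ 2 := by
  have harg {x y : ℝ} (hy : 0 < y) :
      Complex.arg (x + y * Complex.I) = π / 2 - arctan (x / y) := by
    simpa using Complex.arg_eq_pi_div_two_sub_arctan (z := x + y * Complex.I) (by simpa using hy)
  have hxx := deriv_deriv_of_eventuallyEq_comp hg hg'
    (u := fun x : ℝ => g (Complex.arg (x + z.im * Complex.I)))
    (.of_forall fun x => by simp [harg hz])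
    (.of_forall fun x => (hasDerivAt_arctan_div_const hz.ne' x).const_sub (π / 2))
    (hasDerivAt_div_sq_add_sq_left hz.ne' z.re).neg
  have hyy := deriv_deriv_of_eventuallyEq_comp hg hg'
    (u := fun y : ℝ => g (Complex.arg (z.re + y * Complex.I)))
    ((eventually_gt_nhds hz).mono fun y hy => by simp [harg hy])
    ((eventually_gt_nhds hz).mono fun y hy =>
      (hasDerivAt_arctan_const_div z.re hy.ne').const_sub (π / 2))
    (hasDerivAt_div_sq_add_sq_right z.re hz.ne').neg
  have hxy : z.re ^ 2 + z.im ^ 2 ≠ 0 := by positivity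
  rw [planeLaplacian, hxx, hyy, Complex.sq_norm, Complex.normSq_apply,
    Complex.arg_eq_pi_div_two_sub_arctan hz]
  field_simp
  ring

noncomputable def ghat' (θ : ℝ) : ℝ :=
  4 / (3 * π) * ((π - 2 * θ) + 3 * sin θ * cos θ + (π / 2 - θ) * (cos θ ^ 2 - sin θ ^ 2))

noncomputable def ghat'' (θ : ℝ) : ℝ :=
  -(16 / (3 * π)) * sin θ * (sin θ + (π / 2 - θ) * cos θ)

theorem contDiff_ghat {n : WithTop ℕ∞} : ContDiff ℝ n ghat := by
  unfold ghat
  fun_prop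

theorem hasDerivAt_ghat (θ : ℝ) : HasDerivAt ghat (ghat' θ) θ := by
  have h := ((((hasDerivAt_id' θ).mul ((hasDerivAt_id' θ).const_sub π)).add
    ((((hasDerivAt_id' θ).const_sub (π / 2)).mul (hasDerivAt_sin θ)).mul (hasDerivAt_cos θ))).add
    (((hasDerivAt_sin θ).pow 2).const_mul 2)).const_mul (4 / (3 * π))
  refine h.congr_deriv ?_
  simp only [ghat', Pi.mul_apply]
  ring

theorem hasDerivAt_ghat' (θ : ℝ) : HasDerivAt ghat' (ghat'' θ) θ := by
  have h := (((((hasDerivAt_id' θ).const_mul 2).const_sub π).add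
    (((hasDerivAt_sin θ).const_mul 3).mul (hasDerivAt_cos θ))).add
    (((hasDerivAt_id' θ).const_sub (π / 2)).mul
      (((hasDerivAt_cos θ).pow 2).sub ((hasDerivAt_sin θ).pow 2)))).const_mul (4 / (3 * π))
  refine h.congr_deriv ?_
  simp only [ghat'', Pi.sub_apply, Pi.pow_apply]
  linear_combination (8 / (3 * π)) * sin_sq_add_cos_sq θ

theorem qDensity_eq_ghat'' (z : ℂ) :
    qDensity z = -(3 / 4) * (ghat'' (Complex.arg z) / ‖z‖ ^ 2) := by
  rcases eq_or_ne z 0 with rfl | hz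
  · simp [qDensity]
  have hr : ‖z‖ ≠ 0 := norm_ne_zero_iff.2 hz
  rw [qDensity, ghat'', ← Complex.norm_mul_cos_arg z, ← Complex.norm_mul_sin_arg z]
  field_simp
  ring

/-- The PDE statement of Lemma 4.6: `u(z) = ĝ(arg z)` is twice continuously differentiable
on the upper half-plane and satisfies the Poisson equation `Δu = −(4/3) q` there. -/
theorem ghat_arg_solves_poisson :
    ContDiffOn ℝ 2 (fun z : ℂ => ghat (Complex.arg z)) {z : ℂ | 0 < z.im} ∧
    ∀ z ∈ {z : ℂ | 0 < z.im},
      planeLaplacian (fun z : ℂ => ghat (Complex.arg z)) z = -(4 / 3) * qDensity z :=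
  ⟨contDiff_ghat.comp_contDiffOn fun z hz =>
      (Complex.contDiffAt_arg (Complex.mem_slitPlane_iff.2 (Or.inr hz.ne'))).contDiffWithinAt,
    fun z hz => by
      rw [planeLaplacian_comp_arg hasDerivAt_ghat hasDerivAt_ghat' hz, qDensity_eq_ghat'']
      ring⟩
end

section
/- Define q : ℍ → ℝ by q(w) = (4·Im(w)/(π·|w|⁴)) · (Im(w) + Re(w)·(π/2 − arg(w))), where arg denotes the principal argument (taking values in (0, π) on ℍ), and define ĝ : ℝ → ℝ by ĝ(θ) = (4/(3π)) · (θ(π − θ) + (π/2 − θ)·sin θ·cos θ + 2·sin²θ). Suppose g : ℍ → ℝ is bounded, twice continuously differentiable on ℍ, satisfies −Δg(z) = (4/3)·q(z) for all z ∈ ℍ (Δ the Euclidean Laplacian on ℍ ⊆ ℝ²), and satisfies g(z) → 0 as z → x with z ∈ ℍ, for every x ∈ ℝ with x ≠ 0. Then g(z) = ĝ(arg z) for all z ∈ ℍ. -/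
open Real Filter

/-!
The difference `u = g - ĝ ∘ arg` is bounded and harmonic on the upper half-plane and tends to `0`
at every nonzero real point, because `ĝ ∘ arg` solves the same problem: for a profile `f`,
`Δ (f ∘ arg) = f''(arg z) / |z|²`, and `ĝ''(θ)` is exactly `-(4/3) |z|² q(z)`.

Such a `u` vanishes. Nothing is known about `u` near `0` and `∞`; the barrier
`B z = 2 log |z + i| - log |z|` is harmonic on the half-plane, dominates `|log |z||` and so
blows up at both. The weak maximum principle on `{0 < Im z, |z| < R}` with `R` large gives
`± u ≤ δ B` for every `δ > 0`, and letting `δ → 0` gives `u = 0`.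
-/

open Complex (I arg)
open InnerProductSpace Laplacian Topology Set

section Laplacian

theorem deriv_deriv_comp_eq_iteratedFDeriv {f : ℂ → ℝ} {L : ℝ → ℂ} {v : ℂ}
    (hL : ∀ t, HasDerivAt L v t) {t : ℝ} (hf : ContDiffAt ℝ 2 f (L t)) :
    deriv (deriv (f ∘ L)) t = iteratedFDeriv ℝ 2 f (L t) ![v, v] := by
  have hLc : Continuous L := continuous_iff_continuousAt.2 fun s => (hL s).continuousAt
  have hdiff : ∀ᶠ s in 𝓝 t, DifferentiableAt ℝ f (L s) :=
    hLc.continuousAt.eventually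
      ((hf.eventually (by simp)).mono fun w hw => hw.differentiableAt (by simp))
  have hderiv : deriv (f ∘ L) =ᶠ[𝓝 t] fun s => fderiv ℝ f (L s) v :=
    hdiff.mono fun s hs => (hs.hasFDerivAt.comp_hasDerivAt s (hL s)).deriv
  have hf' : DifferentiableAt ℝ (fderiv ℝ f) (L t) :=
    (hf.fderiv_right (m := 1) (by norm_num)).differentiableAt (by simp)
  rw [hderiv.deriv_eq, iteratedFDeriv_two_apply]
  exact ((hf'.hasFDerivAt.comp_hasDerivAt t (hL t)).clm_apply (hasDerivAt_const t v)).deriv.trans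
    (by simp)

theorem planeLaplacian_eq_laplacian {f : ℂ → ℝ} {z : ℂ} (hf : ContDiffAt ℝ 2 f z) :
    planeLaplacian f z = Δ f z := by
  have hx : ∀ x : ℝ, HasDerivAt (fun x : ℝ => (x : ℂ) + z.im * I) 1 x := fun x =>
    (Complex.ofRealCLM.hasDerivAt (x := x)).add_const _
  have hy : ∀ y : ℝ, HasDerivAt (fun y : ℝ => (z.re : ℂ) + y * I) I y := fun y => by
    simpa using ((Complex.ofRealCLM.hasDerivAt (x := y)).mul_const I).const_add (z.re : ℂ)
  have hz : z.re + z.im * I = z := Complex.re_add_im z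
  have hre := deriv_deriv_comp_eq_iteratedFDeriv (f := f) hx (t := z.re) (by rwa [hz])
  have him := deriv_deriv_comp_eq_iteratedFDeriv (f := f) hy (t := z.im) (by rwa [hz])
  simp only [Function.comp_def, hz] at hre him
  rw [laplacian_eq_iteratedFDeriv_complexPlane, planeLaplacian, hre, him]

theorem planeLaplacian_eq_of_hasDerivAt {f : ℂ → ℝ} {z : ℂ} {fx fy : ℝ → ℝ} {a b : ℝ}
    (hx : ∀ᶠ x in 𝓝 z.re, HasDerivAt (fun x : ℝ => f (x + z.im * I)) (fx x) x)
    (hx' : HasDerivAt fx a z.re)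
    (hy : ∀ᶠ y in 𝓝 z.im, HasDerivAt (fun y : ℝ => f (z.re + y * I)) (fy y) y)
    (hy' : HasDerivAt fy b z.im) :
    planeLaplacian f z = a + b := by
  rw [planeLaplacian, EventuallyEq.deriv_eq (hx.mono fun x h => h.deriv),
    EventuallyEq.deriv_eq (hy.mono fun y h => h.deriv), hx'.deriv, hy'.deriv]

theorem IsLocalMax.deriv_deriv_nonpos {f : ℝ → ℝ} {a : ℝ} (h : IsLocalMax f a)
    (hc : ContinuousAt f a) : deriv (deriv f) a ≤ 0 := by
  by_contra! hpos
  have hmin := isLocalMin_of_deriv_deriv_pos hpos h.deriv_eq_zero hc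
  have hconst : f =ᶠ[𝓝 a] fun _ => f a := (h.and hmin).mono fun x hx => le_antisymm hx.1 hx.2
  have hderiv : deriv f =ᶠ[𝓝 a] fun _ => 0 :=
    hconst.eventually_nhds.mono fun x hx => by rw [EventuallyEq.deriv_eq hx, deriv_const]
  rw [hderiv.deriv_eq, deriv_const] at hpos
  exact hpos.false

theorem IsLocalMax.laplacian_nonpos {f : ℂ → ℝ} {z : ℂ} (h : IsLocalMax f z)
    (hf : ContDiffAt ℝ 2 f z) : Δ f z ≤ 0 := by
  have hz : z.re + z.im * I = z := Complex.re_add_im z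
  have hx : ContinuousAt (fun x : ℝ => (x : ℂ) + z.im * I) z.re := by fun_prop
  have hy : ContinuousAt (fun y : ℝ => (z.re : ℂ) + y * I) z.im := by fun_prop
  have hmax : IsLocalMax f (z.re + z.im * I) := by rwa [hz]
  have hfc : ContinuousAt f (z.re + z.im * I) := by rw [hz]; exact hf.continuousAt
  rw [← planeLaplacian_eq_laplacian hf, planeLaplacian]
  exact add_nonpos
    ((hmax.comp_continuous (g := fun x : ℝ => (x : ℂ) + z.im * I) hx).deriv_deriv_nonpos
      (hfc.comp (f := fun x : ℝ => (x : ℂ) + z.im * I) hx))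
    ((hmax.comp_continuous (g := fun y : ℝ => (z.re : ℂ) + y * I) hy).deriv_deriv_nonpos
      (hfc.comp (f := fun y : ℝ => (z.re : ℂ) + y * I) hy))

theorem laplacian_re_sq (z : ℂ) : Δ (fun w : ℂ => w.re ^ 2) z = 2 := by
  have hf : ContDiff ℝ 2 fun w : ℂ => w.re ^ 2 := Complex.reCLM.contDiff.pow 2
  have hd : deriv (fun x : ℝ => x ^ 2) = fun x => 2 * x := funext fun x => by simp
  rw [← planeLaplacian_eq_laplacian hf.contDiffAt, planeLaplacian]
  simp [hd]

end Laplacian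

section MaximumPrinciple

theorem le_of_forall_not_isLocalMax_of_frontier {E : Type*} [MetricSpace E] [ProperSpace E]
    {U : Set E} {w : E → ℝ} {c₀ : ℝ} (hU : IsOpen U) (hUb : Bornology.IsBounded U)
    (hw : ContinuousOn w U) (hbdd : BddAbove (w '' U)) (hmax : ∀ z ∈ U, ¬ IsLocalMax w z)
    (hfr : ∀ p ∈ frontier U, ∀ c > c₀, ∀ᶠ z in 𝓝[U] p, w z ≤ c) :
    ∀ z ∈ U, w z ≤ c₀ := by
  intro z hz
  refine (le_csSup hbdd (mem_image_of_mem w hz)).trans ?_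
  obtain ⟨s, -, hs, hsU⟩ := exists_seq_tendsto_sSup ⟨w z, mem_image_of_mem w hz⟩ hbdd
  choose zs hzsU hzsw using hsU
  obtain ⟨p, hp, φ, hφ, hlim⟩ :=
    hUb.isCompact_closure.tendsto_subseq fun n => subset_closure (hzsU n)
  have hwlim : Tendsto (fun n => w (zs (φ n))) atTop (𝓝 (sSup (w '' U))) := by
    simpa only [hzsw, Function.comp_def] using hs.comp hφ.tendsto_atTop
  by_cases hpU : p ∈ U
  · have hwp : w p = sSup (w '' U) :=
      tendsto_nhds_unique ((hw.continuousAt (hU.mem_nhds hpU)).tendsto.comp hlim) hwlim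
    refine absurd ?_ (hmax p hpU)
    filter_upwards [hU.mem_nhds hpU] with y hy
    exact hwp ▸ le_csSup hbdd (mem_image_of_mem w hy)
  · have hpfr : p ∈ frontier U := by rw [hU.frontier_eq]; exact ⟨hp, hpU⟩
    have hzn : Tendsto (fun n => zs (φ n)) atTop (𝓝[U] p) :=
      tendsto_nhdsWithin_iff.2 ⟨hlim, Eventually.of_forall fun n => hzsU _⟩
    exact le_of_forall_gt_imp_ge_of_dense fun c hc =>
      le_of_tendsto hwlim (hzn.eventually (hfr p hpfr c hc))

theorem le_zero_of_laplacian_nonneg {U : Set ℂ} {v : ℂ → ℝ} (hU : IsOpen U)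
    (hUb : Bornology.IsBounded U) (hv : ContDiffOn ℝ 2 v U) (hΔ : ∀ z ∈ U, 0 ≤ Δ v z)
    (hbdd : BddAbove (v '' U)) (hfr : ∀ p ∈ frontier U, ∀ c > 0, ∀ᶠ z in 𝓝[U] p, v z ≤ c) :
    ∀ z ∈ U, v z ≤ 0 := by
  obtain ⟨R, hR⟩ := hUb.subset_closedBall 0
  have hre : ∀ z ∈ U, z.re ^ 2 ≤ R ^ 2 := fun z hz => by
    rw [← sq_abs]
    exact pow_le_pow_left₀ (abs_nonneg _)
      ((Complex.abs_re_le_norm z).trans (mem_closedBall_zero_iff.1 (hR hz))) 2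
  obtain ⟨M, hM⟩ := hbdd
  set q : ℂ → ℝ := fun w => w.re ^ 2
  have hq : ContDiff ℝ 2 q := Complex.reCLM.contDiff.pow 2
  -- Adding `ε q` makes the Laplacian strictly positive, which rules out interior maxima.
  have hpert : ∀ ε > 0, ∀ z ∈ U, (v + ε • q) z ≤ ε * R ^ 2 := by
    intro ε hε
    refine le_of_forall_not_isLocalMax_of_frontier hU hUb
      (hv.continuousOn.add (hq.continuous.const_smul ε).continuousOn) ?_ ?_ ?_
    · refine ⟨M + ε * R ^ 2, ?_⟩
      rintro _ ⟨z, hz, rfl⟩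
      have := mul_le_mul_of_nonneg_left (hre z hz) hε.le
      simp only [Pi.add_apply, Pi.smul_apply, smul_eq_mul, q]
      linarith [hM ⟨z, hz, rfl⟩]
    · intro z hz hmax
      have hvz := hv.contDiffAt (hU.mem_nhds hz)
      have hεq : ContDiffAt ℝ 2 (ε • q) z := hq.contDiffAt.const_smul ε
      have hΔw := hmax.laplacian_nonpos (hvz.add hεq)
      rw [hvz.laplacian_add hεq, laplacian_smul ε hq.contDiffAt,
        laplacian_re_sq] at hΔw
      linarith [hΔ z hz, smul_eq_mul ε (2 : ℝ)]
    · intro p hp c hc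
      filter_upwards [hfr p hp (c - ε * R ^ 2) (by linarith), self_mem_nhdsWithin] with z hvz hz
      have := mul_le_mul_of_nonneg_left (hre z hz) hε.le
      simp only [Pi.add_apply, Pi.smul_apply, smul_eq_mul, q]
      linarith
  intro z hz
  have hlim : Tendsto (fun ε => ε * R ^ 2) (𝓝[>] 0) (𝓝 0) :=
    ((continuous_mul_const _).tendsto' 0 0 (zero_mul _)).mono_left nhdsWithin_le_nhds
  refine ge_of_tendsto hlim (eventually_nhdsWithin_of_forall fun ε (hε : 0 < ε) => ?_)
  have h := hpert ε hε z hz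
  simp only [Pi.add_apply, Pi.smul_apply, smul_eq_mul, q] at h
  nlinarith [sq_nonneg z.re]

end MaximumPrinciple

section UpperHalfPlane

noncomputable def halfPlaneBarrier (z : ℂ) : ℝ := 2 * Real.log ‖z + I‖ - Real.log ‖z‖

theorem harmonicOnNhd_halfPlaneBarrier :
    HarmonicOnNhd halfPlaneBarrier {z : ℂ | 0 < z.im} := by
  intro z (hz : 0 < z.im)
  have hzI : z + I ≠ 0 := ne_of_apply_ne Complex.im (ne_of_gt (by
    simp only [Complex.zero_im, Complex.add_im, Complex.I_im]; linarith))
  have hz0 : z ≠ 0 := ne_of_apply_ne Complex.im hz.ne'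
  have h₁ := (analyticAt_id.add analyticAt_const).harmonicAt_log_norm hzI
  have h₀ := analyticAt_id.harmonicAt_log_norm hz0
  have h := (h₁.const_smul (c := (2 : ℝ))).sub h₀
  convert h using 1
  ext w
  simp [halfPlaneBarrier]

theorem abs_log_norm_le_halfPlaneBarrier {z : ℂ} (hz : 0 < z.im) :
    |Real.log ‖z‖| ≤ halfPlaneBarrier z := by
  have hz0 : 0 < ‖z‖ := norm_pos_iff.2 fun h => by simp [h] at hz
  have h1 : 1 ≤ ‖z + I‖ := by
    refine le_trans ?_ (Complex.abs_im_le_norm (z + I))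
    rw [Complex.add_im, Complex.I_im, abs_of_pos (by linarith)]
    linarith
  have h2 : ‖z‖ ≤ ‖z + I‖ := by
    rw [← sq_le_sq₀ (norm_nonneg _) (norm_nonneg _), Complex.sq_norm, Complex.sq_norm,
      Complex.normSq_apply, Complex.normSq_apply]
    simp only [Complex.add_re, Complex.I_re, Complex.add_im, Complex.I_im]
    nlinarith
  have hl1 := Real.log_nonneg h1
  have hl2 := Real.log_le_log hz0 h2
  rw [halfPlaneBarrier, abs_le']
  constructor <;> linarith

theorem frontier_upperHalfPlane_inter_ball {R : ℝ} {p : ℂ}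
    (hp : p ∈ frontier ({z : ℂ | 0 < z.im} ∩ Metric.ball 0 R)) : p.im = 0 ∨ R ≤ ‖p‖ := by
  have hU : IsOpen ({z : ℂ | 0 < z.im} ∩ Metric.ball 0 R) :=
    (isOpen_lt continuous_const Complex.continuous_im).inter Metric.isOpen_ball
  rw [hU.frontier_eq] at hp
  have him : 0 ≤ p.im := closure_minimal (fun z hz => le_of_lt hz.1)
    (isClosed_le continuous_const Complex.continuous_im) hp.1
  rcases him.eq_or_lt with h | h
  · exact Or.inl h.symm
  · exact Or.inr (not_lt.1 fun hR => hp.2 ⟨h, mem_ball_zero_iff.2 hR⟩)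

theorem eventually_sub_smul_halfPlaneBarrier_le {u : ℂ → ℝ} {C δ R : ℝ} (hδ : 0 < δ)
    (hC : ∀ z ∈ {z : ℂ | 0 < z.im}, u z ≤ C) (hR : Real.exp (C / δ) < R)
    (hbdry : ∀ x : ℝ, x ≠ 0 → Tendsto u (𝓝[{z : ℂ | 0 < z.im}] x) (𝓝 0)) {p : ℂ}
    (hp : p ∈ frontier ({z : ℂ | 0 < z.im} ∩ Metric.ball 0 R)) {c : ℝ} (hc : 0 < c) :
    ∀ᶠ z in 𝓝[{z : ℂ | 0 < z.im} ∩ Metric.ball 0 R] p,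
      (u - δ • halfPlaneBarrier) z ≤ c := by
  set U := {z : ℂ | 0 < z.im} ∩ Metric.ball 0 R
  have hUH : U ⊆ {z : ℂ | 0 < z.im} := inter_subset_left
  have hB : ∀ z ∈ U, |Real.log ‖z‖| ≤ halfPlaneBarrier z := fun z hz =>
    abs_log_norm_le_halfPlaneBarrier (hUH hz)
  -- Near `0` and near the arc `‖z‖ = R`, `|log ‖z‖| ≥ C / δ`: there the barrier dominates `u`.
  have hlarge : ∀ z ∈ U, C / δ ≤ |Real.log ‖z‖| → (u - δ • halfPlaneBarrier) z ≤ c := by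
    intro z hz hK
    have := mul_le_mul_of_nonneg_left (hK.trans (hB z hz)) hδ.le
    rw [mul_div_cancel₀ C hδ.ne'] at this
    simp only [Pi.sub_apply, Pi.smul_apply, smul_eq_mul]
    linarith [hC z (hUH hz)]
  rcases frontier_upperHalfPlane_inter_ball hp with hp0 | hpR
  · by_cases hre : p.re = 0
    · obtain rfl : p = 0 := Complex.ext hre hp0
      have hlog : Tendsto (fun z : ℂ => Real.log ‖z‖) (𝓝[U] 0) atBot :=
        (Real.tendsto_log_nhdsGT_zero.comp tendsto_norm_nhdsNE_zero).mono_left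
          (nhdsWithin_mono _ fun z hz (h0 : z = 0) => by simp [h0, U] at hz)
      filter_upwards [hlog.eventually (eventually_le_atBot (-(C / δ))), self_mem_nhdsWithin]
        with z hz hzU
      exact hlarge z hzU (le_abs.2 (Or.inr (by linarith)))
    · have hpx : (p.re : ℂ) = p := Complex.ext (by simp) (by simp [hp0])
      have hu0 := (hbdry p.re hre).mono_left (nhdsWithin_mono _ hUH)
      rw [hpx] at hu0
      filter_upwards [hu0.eventually (eventually_lt_nhds hc), self_mem_nhdsWithin] with z hz hzU
      have := mul_nonneg hδ.le ((abs_nonneg _).trans (hB z hzU))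
      simp only [Pi.sub_apply, Pi.smul_apply, smul_eq_mul]
      linarith
  · have hev : ∀ᶠ z in 𝓝 p, Real.exp (C / δ) < ‖z‖ :=
      continuous_norm.continuousAt.eventually (lt_mem_nhds (hR.trans_le hpR))
    filter_upwards [eventually_nhdsWithin_of_eventually_nhds hev, self_mem_nhdsWithin]
      with z hz hzU
    have hlog := (Real.lt_log_iff_exp_lt ((Real.exp_pos _).trans hz)).2 hz
    exact hlarge z hzU (le_abs.2 (Or.inl hlog.le))

theorem le_smul_halfPlaneBarrier {u : ℂ → ℝ} {C δ : ℝ}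
    (hu : HarmonicOnNhd u {z : ℂ | 0 < z.im}) (hC : ∀ z ∈ {z : ℂ | 0 < z.im}, u z ≤ C)
    (hbdry : ∀ x : ℝ, x ≠ 0 → Tendsto u (𝓝[{z : ℂ | 0 < z.im}] x) (𝓝 0)) (hδ : 0 < δ) :
    ∀ z ∈ {z : ℂ | 0 < z.im}, u z ≤ δ * halfPlaneBarrier z := by
  intro z₀ hz₀
  set R := Real.exp (C / δ) + ‖z₀‖ + 1
  set U := {z : ℂ | 0 < z.im} ∩ Metric.ball 0 R
  have hUH : U ⊆ {z : ℂ | 0 < z.im} := inter_subset_left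
  have hv := le_zero_of_laplacian_nonneg
    ((isOpen_lt continuous_const Complex.continuous_im).inter Metric.isOpen_ball)
    (Metric.isBounded_ball.subset inter_subset_right)
    ((hu.contDiffOn.sub (harmonicOnNhd_halfPlaneBarrier.contDiffOn.const_smul δ)).mono hUH)
    (fun z hz => ((hu z (hUH hz)).sub
      ((harmonicOnNhd_halfPlaneBarrier z (hUH hz)).const_smul (c := δ))).2.eq_of_nhds.ge)
    ⟨C, ?_⟩
    (fun p hp c hc => eventually_sub_smul_halfPlaneBarrier_le hδ hC
      (by linarith [norm_nonneg z₀]) hbdry hp hc)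
    z₀ ⟨hz₀, mem_ball_zero_iff.2 (by linarith [Real.exp_pos (C / δ)])⟩
  · simp only [smul_eq_mul] at hv
    linarith
  · rintro _ ⟨z, hz, rfl⟩
    have := mul_nonneg hδ.le ((abs_nonneg _).trans (abs_log_norm_le_halfPlaneBarrier (hUH hz)))
    simp only [smul_eq_mul]
    linarith [hC z (hUH hz)]

theorem eq_zero_of_harmonicOnNhd_upperHalfPlane {u : ℂ → ℝ}
    (hu : HarmonicOnNhd u {z : ℂ | 0 < z.im}) (hbdd : ∃ C, ∀ z ∈ {z : ℂ | 0 < z.im}, |u z| ≤ C)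
    (hbdry : ∀ x : ℝ, x ≠ 0 → Tendsto u (𝓝[{z : ℂ | 0 < z.im}] x) (𝓝 0)) :
    ∀ z ∈ {z : ℂ | 0 < z.im}, u z = 0 := by
  obtain ⟨C, hC⟩ := hbdd
  intro z hz
  have hlim : Tendsto (fun δ => δ * halfPlaneBarrier z) (𝓝[>] 0) (𝓝 0) :=
    ((continuous_mul_const _).tendsto' 0 0 (zero_mul _)).mono_left nhdsWithin_le_nhds
  have hle : ∀ v : ℂ → ℝ, HarmonicOnNhd v {z : ℂ | 0 < z.im} →
      (∀ w ∈ {z : ℂ | 0 < z.im}, v w ≤ C) →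
      (∀ x : ℝ, x ≠ 0 → Tendsto v (𝓝[{z : ℂ | 0 < z.im}] x) (𝓝 0)) → v z ≤ 0 :=
    fun v hv hvC hvb => ge_of_tendsto hlim
      (eventually_nhdsWithin_of_forall fun δ hδ => le_smul_halfPlaneBarrier hv hvC hvb hδ z hz)
  have h₁ := hle u hu (fun w hw => (le_abs_self _).trans (hC w hw)) hbdry
  have h₂ := hle (-u) hu.neg (fun w hw => (neg_le_abs _).trans (hC w hw))
    fun x hx => by
      have h := (hbdry x hx).neg
      rwa [neg_zero] at h
  simp only [Pi.neg_apply] at h₂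
  linarith

end UpperHalfPlane

section Argument

theorem arg_eq_pi_div_two_sub_arctan {z : ℂ} (hz : 0 < z.im) :
    arg z = π / 2 - Real.arctan (z.re / z.im) := by
  have hz0 : z ≠ 0 := fun h => by simp [h] at hz
  have hpos : 0 < arg z := (Complex.arg_nonneg_iff.2 hz.le).lt_of_ne
    fun h => hz.ne' (Complex.arg_eq_zero_iff.1 h.symm).2
  have hlt : arg z < π := Complex.arg_lt_pi_iff.2 (Or.inr hz.ne')
  have htan : Real.tan (π / 2 - arg z) = z.re / z.im := by
    rw [Real.tan_eq_sin_div_cos, Real.sin_pi_div_two_sub, Real.cos_pi_div_two_sub,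
      Complex.cos_arg hz0, Complex.sin_arg]
    field_simp
  rw [← htan, Real.arctan_tan (by linarith) (by linarith)]
  ring

theorem arg_ofReal_add_ofReal_mul_I {x y : ℝ} (hy : 0 < y) :
    arg (x + y * I) = π / 2 - Real.arctan (x / y) := by
  simpa using arg_eq_pi_div_two_sub_arctan (z := x + y * I) (by simpa using hy)

theorem hasDerivAt_arg_ofReal_add {y : ℝ} (hy : 0 < y) (x : ℝ) :
    HasDerivAt (fun x : ℝ => arg (x + y * I)) (-y / (x ^ 2 + y ^ 2)) x := by
  simp only [arg_ofReal_add_ofReal_mul_I hy]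
  refine (((hasDerivAt_id' x).div_const y).arctan.const_sub (π / 2)).congr_deriv ?_
  field_simp
  ring

theorem hasDerivAt_arg_add_ofReal_mul_I (x : ℝ) {y : ℝ} (hy : 0 < y) :
    HasDerivAt (fun y : ℝ => arg (x + y * I)) (x / (x ^ 2 + y ^ 2)) y := by
  have h := ((hasDerivAt_const y x).fun_div (hasDerivAt_id' y) hy.ne').arctan.const_sub (π / 2)
  refine (h.congr_deriv ?_).congr_of_eventuallyEq
    ((lt_mem_nhds hy).mono fun t ht => arg_ofReal_add_ofReal_mul_I ht)
  field_simp
  ring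

theorem planeLaplacian_comp_arg_s18 {f f' f'' : ℝ → ℝ} (hf : ∀ t, HasDerivAt f (f' t) t)
    (hf' : ∀ t, HasDerivAt f' (f'' t) t) {z : ℂ} (hz : 0 < z.im) :
    planeLaplacian (fun w => f (arg w)) z = f'' (arg z) / ‖z‖ ^ 2 := by
  set x := z.re
  set y := z.im
  have hr : x ^ 2 + y ^ 2 ≠ 0 := by positivity
  have hxy : (x : ℂ) + y * I = z := Complex.re_add_im z
  have hn : ‖z‖ ^ 2 = x ^ 2 + y ^ 2 := by rw [Complex.sq_norm, Complex.normSq_apply]; ring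
  have hxx : HasDerivAt (fun x => -y / (x ^ 2 + y ^ 2)) (2 * x * y / (x ^ 2 + y ^ 2) ^ 2) x := by
    refine ((hasDerivAt_const x (-y)).fun_div ((hasDerivAt_pow 2 x).add_const _) hr).congr_deriv
      ?_
    field_simp
    ring
  have hyy :
      HasDerivAt (fun y => x / (x ^ 2 + y ^ 2)) (-(2 * x * y) / (x ^ 2 + y ^ 2) ^ 2) y := by
    refine ((hasDerivAt_const y x).fun_div ((hasDerivAt_pow 2 y).const_add _) hr).congr_deriv ?_
    field_simp
    ring
  have hθx := hasDerivAt_arg_ofReal_add hz x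
  have hθy := hasDerivAt_arg_add_ofReal_mul_I x hz
  rw [planeLaplacian_eq_of_hasDerivAt
    (Eventually.of_forall fun t => (hf _).comp t (hasDerivAt_arg_ofReal_add hz t))
    (((hf' _).comp x hθx).fun_mul hxx)
    ((lt_mem_nhds hz).mono fun t ht => (hf _).comp t (hasDerivAt_arg_add_ofReal_mul_I x ht))
    (((hf' _).comp y hθy).fun_mul hyy), hn]
  simp only [Function.comp_apply, hxy]
  field_simp
  ring

end Argument

section ExplicitSolution

theorem hasDerivAt_sin_mul_cos (θ : ℝ) :
    HasDerivAt (fun t => sin t * cos t) (cos θ ^ 2 - sin θ ^ 2) θ :=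
  ((hasDerivAt_sin θ).fun_mul (hasDerivAt_cos θ)).congr_deriv (by ring)

theorem hasDerivAt_ghat_s18 (θ : ℝ) :
    HasDerivAt ghat (4 / (3 * π) * (π - 2 * θ + 3 * sin θ * cos θ +
      (π / 2 - θ) * (cos θ ^ 2 - sin θ ^ 2))) θ := by
  have h := ((((hasDerivAt_id' θ).fun_mul ((hasDerivAt_id' θ).const_sub π)).fun_add
    ((((hasDerivAt_id' θ).const_sub (π / 2)).fun_mul (hasDerivAt_sin_mul_cos θ)))).fun_add
    (((hasDerivAt_sin θ).fun_pow 2).const_mul 2)).const_mul (4 / (3 * π))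
  have e : ∀ t, ghat t = 4 / (3 * π) * (t * (π - t) + (π / 2 - t) * (sin t * cos t) +
      2 * sin t ^ 2) := fun t => by rw [ghat]; ring
  rw [show ghat = _ from funext e]
  exact h.congr_deriv (by push_cast; ring)

theorem hasDerivAt_ghat_deriv (θ : ℝ) :
    HasDerivAt (fun t => 4 / (3 * π) * (π - 2 * t + 3 * sin t * cos t +
      (π / 2 - t) * (cos t ^ 2 - sin t ^ 2)))
      (-(16 / (3 * π)) * sin θ * (sin θ + (π / 2 - θ) * cos θ)) θ := by
  have hd : HasDerivAt (fun t => cos t ^ 2 - sin t ^ 2)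
      (2 * cos θ * -sin θ - 2 * sin θ * cos θ) θ := by
    simpa using ((hasDerivAt_cos θ).fun_pow 2).fun_sub ((hasDerivAt_sin θ).fun_pow 2)
  have h := ((((hasDerivAt_id' θ).const_mul 2).const_sub π).fun_add
    ((hasDerivAt_sin_mul_cos θ).const_mul 3)).fun_add
    (((hasDerivAt_id' θ).const_sub (π / 2)).fun_mul hd) |>.const_mul (4 / (3 * π))
  have e : ∀ t, π - 2 * t + 3 * sin t * cos t + (π / 2 - t) * (cos t ^ 2 - sin t ^ 2) =
      π - 2 * t + 3 * (sin t * cos t) + (π / 2 - t) * (cos t ^ 2 - sin t ^ 2) :=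
    fun t => by ring
  simp only [e]
  refine h.congr_deriv ?_
  have := sin_sq_add_cos_sq θ
  linear_combination 8 / (3 * π) * this

theorem ghat_zero : ghat 0 = 0 := by simp [ghat]

theorem ghat_pi : ghat π = 0 := by simp [ghat]

theorem contDiffAt_ghat_arg {z : ℂ} (hz : 0 < z.im) :
    ContDiffAt ℝ 2 (fun w => ghat (arg w)) z := by
  have hghat : ContDiff ℝ 2 ghat := by unfold ghat; fun_prop
  have hlog : ContDiffAt ℝ 2 Complex.log z :=
    (Complex.contDiffAt_log (Or.inr hz.ne')).restrict_scalars ℝ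
  have harg : ContDiffAt ℝ 2 arg z := by
    simpa [Function.comp_def, Complex.log_im] using
      Complex.imCLM.contDiff.contDiffAt.comp z hlog
  exact hghat.contDiffAt.comp z harg

theorem laplacian_ghat_arg {z : ℂ} (hz : 0 < z.im) :
    Δ (fun w => ghat (arg w)) z = -(4 / 3 * qDensity z) := by
  have hz0 : z ≠ 0 := fun h => by simp [h] at hz
  have hn : ‖z‖ ≠ 0 := norm_ne_zero_iff.2 hz0
  rw [← planeLaplacian_eq_laplacian (contDiffAt_ghat_arg hz),
    planeLaplacian_comp_arg_s18 hasDerivAt_ghat_s18 hasDerivAt_ghat_deriv hz, qDensity,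
    Complex.sin_arg, Complex.cos_arg hz0]
  field_simp
  ring

theorem exists_bound_ghat_arg : ∃ C, ∀ z : ℂ, |ghat (arg z)| ≤ C := by
  have hghat : Continuous ghat := by unfold ghat; fun_prop
  obtain ⟨C, hC⟩ := (isCompact_Icc (a := -π) (b := π)).exists_bound_of_continuousOn
    hghat.continuousOn
  exact ⟨C, fun z => hC _ ⟨(Complex.neg_pi_lt_arg z).le, Complex.arg_le_pi z⟩⟩

theorem tendsto_ghat_arg {x : ℝ} (hx : x ≠ 0) :
    Tendsto (fun w => ghat (arg w)) (𝓝[{z : ℂ | 0 < z.im}] x) (𝓝 0) := by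
  have hghat : Continuous ghat := by unfold ghat; fun_prop
  have hsub : {z : ℂ | 0 < z.im} ⊆ {z : ℂ | 0 ≤ z.im} := fun z (hz : 0 < z.im) => hz.le
  rcases hx.lt_or_gt with hneg | hpos
  · have harg := (Complex.tendsto_arg_nhdsWithin_im_nonneg_of_re_neg_of_im_zero
      (z := x) (by simpa using hneg) (by simp)).mono_left (nhdsWithin_mono _ hsub)
    simpa only [Function.comp_def, ghat_pi] using (hghat.tendsto π).comp harg
  · have harg := (Complex.continuousAt_arg (x := x) (Or.inl (by simpa using hpos))).tendsto
      |>.mono_left (nhdsWithin_le_nhds (s := {z : ℂ | 0 < z.im}))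
    rw [Complex.arg_ofReal_of_nonneg hpos.le] at harg
    simpa only [Function.comp_def, ghat_zero] using (hghat.tendsto 0).comp harg

end ExplicitSolution

/-- The uniqueness characterization of the bounded solution to the Poisson–Dirichlet
problem (4.22) in Lemma 4.6 for `(Ω; x₁, x₃) = (ℍ; 0, ∞)`: any bounded `C²` function `g`
on the upper half-plane with `−Δg = (4/3) q` and vanishing boundary values on `ℝ \ {0}`
equals the explicit function `ĝ(arg z)`. -/
theorem poisson_dirichlet_unique (g : ℂ → ℝ)
    (hbdd : ∃ C : ℝ, ∀ z ∈ {z : ℂ | 0 < z.im}, |g z| ≤ C)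
    (hC2 : ContDiffOn ℝ 2 g {z : ℂ | 0 < z.im})
    (hpde : ∀ z ∈ {z : ℂ | 0 < z.im}, -planeLaplacian g z = 4 / 3 * qDensity z)
    (hbdry : ∀ x : ℝ, x ≠ 0 →
      Tendsto g (nhdsWithin (x : ℂ) {z : ℂ | 0 < z.im}) (nhds 0)) :
    ∀ z ∈ {z : ℂ | 0 < z.im}, g z = ghat (Complex.arg z) := by
  have hH : IsOpen {z : ℂ | 0 < z.im} := isOpen_lt continuous_const Complex.continuous_im
  have hg : ∀ z ∈ {z : ℂ | 0 < z.im}, ContDiffAt ℝ 2 g z := fun z hz =>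
    hC2.contDiffAt (hH.mem_nhds hz)
  have hharm : HarmonicOnNhd (g - fun w => ghat (arg w)) {z : ℂ | 0 < z.im} := fun z hz =>
    ⟨(hg z hz).sub (contDiffAt_ghat_arg hz), by
      filter_upwards [hH.mem_nhds hz] with w hw
      rw [Pi.zero_apply, (hg w hw).laplacian_sub (contDiffAt_ghat_arg hw),
        laplacian_ghat_arg hw, ← planeLaplacian_eq_laplacian (hg w hw)]
      linarith [hpde w hw]⟩
  obtain ⟨C, hC⟩ := hbdd
  obtain ⟨C', hC'⟩ := exists_bound_ghat_arg
  have hzero := eq_zero_of_harmonicOnNhd_upperHalfPlane hharm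
    ⟨C + C', fun z hz => (abs_sub _ _).trans (add_le_add (hC z hz) (hC' z))⟩
    fun x hx => by
      have h := (hbdry x hx).sub (tendsto_ghat_arg hx)
      rwa [sub_zero] at h
  exact fun z hz => sub_eq_zero.1 (hzero z hz)
end
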